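/- arXiv:2206.10426 — 2 statements merged into one kernel-verified Lean document; each statement's English description precedes it below -/
import Mathlib

section
/- Let (T_t) be a C₀-semigroup on a Banach space X and α ∈ (0,1]. Suppose there is C > 0 such that for all t > 1: ∫₀ᵗ ‖T_s x‖² ds ≤ C t^{2α} ‖x‖² for all x ∈ X, and ∫₀ᵗ ‖T_s* x*‖² ds ≤ C t^{2α} ‖x*‖² for all x* ∈ X*. Then ‖T_t‖ = O(t^α / √(log t)) as t → ∞. -/
open MeasureTheory Filter Set intervalIntegral

/-!
Splitting `T t = T (t - s) ∘ T s` and averaging against `ds / s` over `[1, t]` gives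
`|x' (T t x)| log t ≤ ∫₁ᵗ ‖x' ∘ T (t - s)‖ ‖T s x‖ / s ds`, and Cauchy–Schwarz bounds this by
`(∫₀ᵗ ‖x' ∘ T u‖²)^{1/2} (∫₁ᵗ ‖T s x‖² / s² ds)^{1/2}`. The dual Cesàro bound makes the first
factor `O(t^α ‖x'‖)`. For the second, on each dyadic block `[2^k, 2^{k+1}]` the primal bound and
`α ≤ 1` give `∫ ‖T s x‖² / s² ≤ 4 C ‖x‖²`, and `O(log t)` blocks cover `[1, t]`, so the second
factor is `O(√(log t) ‖x‖)`. Dividing by `log t` gives `‖T t‖ = O(t^α / √(log t))`.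
-/

section StronglyContinuousFamily

variable {α E F : Type*} [TopologicalSpace α] [NormedAddCommGroup E] [NormedAddCommGroup F]

theorem IsCompact.exists_bound_norm_of_continuousOn_apply {𝕜 : Type*} [NontriviallyNormedField 𝕜]
    [NormedSpace 𝕜 E] [NormedSpace 𝕜 F] [CompleteSpace E] {S : α → E →L[𝕜] F} {K : Set α}
    (hK : IsCompact K)
    (hS : ∀ x, ContinuousOn (fun t => S t x) K) : ∃ M, ∀ t ∈ K, ‖S t‖ ≤ M := by
  obtain ⟨M, hM⟩ := banach_steinhaus (g := fun t : K => S t) fun x => by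
    obtain ⟨C, hC⟩ := hK.exists_bound_of_continuousOn (hS x)
    exact ⟨C, fun t => hC t t.2⟩
  exact ⟨M, fun t ht => hM ⟨t, ht⟩⟩

theorem lowerSemicontinuous_norm_of_continuous_apply {𝕜 : Type*} [DenselyNormedField 𝕜]
    [NormedSpace 𝕜 E] [NormedSpace 𝕜 F] {S : α → E →L[𝕜] F}
    (hS : ∀ x, Continuous fun t => S t x) : LowerSemicontinuous fun t => ‖S t‖ := by
  intro t y hy
  obtain ⟨v, hv, hyv⟩ := (S t).exists_lt_apply_of_lt_opNorm hy
  filter_upwards [continuousAt_const.eventually_lt (hS v).norm.continuousAt hyv] with t' ht'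
  exact ht'.trans_le ((S t').unit_le_opNorm v hv.le)

end StronglyContinuousFamily

theorem memLp_restrict_Ioc_of_bound {E : Type*} [NormedAddCommGroup E] {f : ℝ → E} {a b M : ℝ}
    (hf : AEStronglyMeasurable f (volume.restrict (Ioc a b))) (hM : ∀ s ∈ Ioc a b, ‖f s‖ ≤ M)
    (p : ENNReal) : MemLp f p (volume.restrict (Ioc a b)) :=
  .of_bound hf M (ae_restrict_of_forall_mem measurableSet_Ioc hM)

theorem intervalIntegral.integral_mul_le_sqrt_mul_sqrt {f g : ℝ → ℝ} {a b : ℝ} (hab : a ≤ b)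
    (hf0 : ∀ s ∈ Ioc a b, 0 ≤ f s) (hg0 : ∀ s ∈ Ioc a b, 0 ≤ g s)
    (hf : MemLp f 2 (volume.restrict (Ioc a b))) (hg : MemLp g 2 (volume.restrict (Ioc a b))) :
    ∫ s in a..b, f s * g s ≤ √(∫ s in a..b, f s ^ 2) * √(∫ s in a..b, g s ^ 2) := by
  have h2 : ENNReal.ofReal 2 = 2 := by norm_num
  simp only [integral_of_le hab, Real.sqrt_eq_rpow, ← Real.rpow_two]
  exact integral_mul_le_Lp_mul_Lq_of_nonneg Real.HolderConjugate.two_two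
    (ae_restrict_of_forall_mem measurableSet_Ioc hf0)
    (ae_restrict_of_forall_mem measurableSet_Ioc hg0) (h2 ▸ hf) (h2 ▸ hg)

section WeightedIntegral

variable {f : ℝ → ℝ} {K : ℝ}

theorem MeasureTheory.LocallyIntegrableOn.intervalIntegrable_of_nonneg
    (hf : LocallyIntegrableOn f (Ici 0)) {a b : ℝ} (ha : 0 ≤ a) (hb : 0 ≤ b) : IntervalIntegrable f volume a b :=
  (hf.integrableOn_compact_subset (fun _ hs => (le_min ha hb).trans hs.1)
    isCompact_uIcc).intervalIntegrable

theorem intervalIntegrable_div_sq (hf : LocallyIntegrableOn f (Ici 0)) {a b : ℝ}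
    (ha : 0 < a) (hb : 0 < b) : IntervalIntegrable (fun s => f s / s ^ 2) volume a b := by
  have hpos : uIcc a b ⊆ Ioi 0 := fun s hs => (lt_min ha hb).trans_le hs.1
  have := (hf.integrableOn_compact_subset (hpos.trans Ioi_subset_Ici_self)
    isCompact_uIcc).mul_continuousOn
      ((continuousOn_pow 2).inv₀ fun s hs => pow_ne_zero 2 (hpos hs).ne') isCompact_uIcc
  exact this.intervalIntegrable.congr fun s _ => by simp [div_eq_mul_inv]

theorem integral_div_sq_two_mul_le (hf : LocallyIntegrableOn f (Ici 0)) (hf0 : ∀ s, 0 ≤ f s)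
    (hK : ∀ t, 1 < t → ∫ s in 0..t, f s ≤ K * t ^ 2) {a : ℝ} (ha : 1 ≤ a) :
    ∫ s in a..2 * a, f s / s ^ 2 ≤ 4 * K := by
  have ha0 : 0 < a := by linarith
  calc ∫ s in a..2 * a, f s / s ^ 2
      ≤ ∫ s in a..2 * a, f s / a ^ 2 := by
        refine integral_mono_on (by linarith) (intervalIntegrable_div_sq hf ha0 (by linarith)) ?_
          fun s hs => div_le_div_of_nonneg_left (hf0 s) (by positivity)
            (pow_le_pow_left₀ ha0.le hs.1 2)
        exact (hf.intervalIntegrable_of_nonneg ha0.le (by linarith)).div_const _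
    _ = (∫ s in a..2 * a, f s) / a ^ 2 := integral_div _ _
    _ ≤ (∫ s in 0..2 * a, f s) / a ^ 2 := by
        gcongr
        exact integral_mono_interval ha0.le (by linarith) le_rfl (ae_of_all _ hf0)
          (hf.intervalIntegrable_of_nonneg le_rfl (by linarith))
    _ ≤ K * (2 * a) ^ 2 / a ^ 2 := by gcongr; exact hK _ (by linarith)
    _ = 4 * K := by field_simp; ring

theorem integral_div_sq_pow_two_le (hf : LocallyIntegrableOn f (Ici 0)) (hf0 : ∀ s, 0 ≤ f s)
    (hK : ∀ t, 1 < t → ∫ s in 0..t, f s ≤ K * t ^ 2) (n : ℕ) :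
    ∫ s in 1..2 ^ n, f s / s ^ 2 ≤ 4 * K * n := by
  induction n with
  | zero => simp
  | succ n ih =>
    have h1 : (1 : ℝ) ≤ 2 ^ n := one_le_pow₀ one_le_two
    rw [pow_succ', ← integral_add_adjacent_intervals (b := 2 ^ n)
      (intervalIntegrable_div_sq hf one_pos (by positivity))
      (intervalIntegrable_div_sq hf (by positivity) (by positivity))]
    push_cast
    linarith [integral_div_sq_two_mul_le hf hf0 hK h1]

theorem integral_div_sq_le_log (hf : LocallyIntegrableOn f (Ici 0)) (hf0 : ∀ s, 0 ≤ f s)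
    (hK : ∀ t, 1 < t → ∫ s in 0..t, f s ≤ K * t ^ 2) {t : ℝ} (ht : Real.exp 1 ≤ t) :
    ∫ s in 1..t, f s / s ^ 2 ≤ 12 * K * Real.log t := by
  have ht1 : 1 ≤ t := (Real.one_lt_exp_iff.2 one_pos).le.trans ht
  have hlog : 1 ≤ Real.log t := (Real.le_log_iff_exp_le (by linarith)).2 ht
  have hK0 : 0 ≤ K := by
    have := (integral_nonneg zero_le_two fun s _ => hf0 s).trans (hK 2 one_lt_two)
    linarith
  obtain ⟨n, hn, htn⟩ := exists_nat_pow_near ht1 one_lt_two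
  have hn_log : (n : ℝ) ≤ 2 * Real.log t := by
    have : n * Real.log 2 ≤ Real.log t := by
      rw [← Real.log_pow]; exact Real.log_le_log (by positivity) hn
    nlinarith [Real.log_two_gt_d9]
  calc ∫ s in 1..t, f s / s ^ 2
      ≤ ∫ s in 1..2 ^ (n + 1), f s / s ^ 2 :=
        integral_mono_interval le_rfl ht1 htn.le
          (ae_restrict_of_forall_mem measurableSet_Ioc fun s hs =>
            div_nonneg (hf0 s) (sq_nonneg s))
          (intervalIntegrable_div_sq hf one_pos (by positivity))
    _ ≤ 4 * K * (n + 1) := by exact_mod_cast integral_div_sq_pow_two_le hf hf0 hK (n + 1)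
    _ ≤ 12 * K * Real.log t := by nlinarith

end WeightedIntegral

section Semigroup

variable {𝕜 E : Type*} [RCLike 𝕜] [NormedAddCommGroup E] [NormedSpace 𝕜 E] {T : ℝ → E →L[𝕜] E}

theorem norm_dual_apply_le_of_semigroup
    (hT : ∀ s t, 0 ≤ s → 0 ≤ t → T (s + t) = (T s).comp (T t))
    (x' : StrongDual 𝕜 E) (x : E) {s t : ℝ} (hs : 0 ≤ s) (hst : s ≤ t) :
    ‖x' (T t x)‖ ≤ ‖x'.comp (T (t - s))‖ * ‖T s x‖ := by
  have hsplit : T t = (T (t - s)).comp (T s) := by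
    simpa using hT (t - s) s (by linarith) hs
  rw [hsplit]
  exact (x'.comp (T (t - s))).le_opNorm (T s x)

theorem norm_dual_apply_mul_log_le [CompleteSpace E]
    (hT : ∀ s t, 0 ≤ s → 0 ≤ t → T (s + t) = (T s).comp (T t))
    (hTcont : ∀ x, ContinuousOn (fun t => T t x) (Ici 0))
    (x' : StrongDual 𝕜 E) (x : E) {t : ℝ} (ht : 1 ≤ t) :
    ‖x' (T t x)‖ * Real.log t ≤
      √(∫ u in 0..t - 1, ‖x'.comp (T u)‖ ^ 2) * √(∫ s in 1..t, ‖T s x‖ ^ 2 / s ^ 2) := by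
  -- continuous orbits on all of `ℝ`, so that lower semicontinuity yields measurability
  set S : ℝ → E →L[𝕜] E := fun u => T (max u 0)
  have hS : ∀ x, Continuous fun u => S u x := fun x =>
    (hTcont x).comp_continuous (continuous_id.max continuous_const) fun u => le_max_right u 0
  set G : ℝ → ℝ := fun s => ‖x'.comp (S (t - s))‖
  set F : ℝ → ℝ := fun s => ‖S s x‖ / s
  have hG : MemLp G 2 (volume.restrict (Ioc 1 t)) := by
    have hR : ∀ v, Continuous fun s => x'.comp (S (t - s)) v := fun v =>
      x'.continuous.comp ((hS v).comp (continuous_sub_left t))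
    obtain ⟨M, hM⟩ := (isCompact_Icc (a := 1) (b := t)).exists_bound_norm_of_continuousOn_apply
      fun v => (hR v).continuousOn
    exact memLp_restrict_Ioc_of_bound
      (lowerSemicontinuous_norm_of_continuous_apply hR).measurable.aestronglyMeasurable
      (fun s hs => (norm_norm _).trans_le (hM s (Ioc_subset_Icc_self hs))) 2
  have hF : MemLp F 2 (volume.restrict (Ioc 1 t)) := by
    have hFc : ContinuousOn F (Icc 1 t) :=
      (hS x).norm.continuousOn.div continuousOn_id fun s hs => by linarith [hs.1]
    obtain ⟨M, hM⟩ := isCompact_Icc.exists_bound_of_continuousOn hFc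
    exact memLp_restrict_Ioc_of_bound
      ((hFc.mono Ioc_subset_Icc_self).aestronglyMeasurable measurableSet_Ioc)
      (fun s hs => hM s (Ioc_subset_Icc_self hs)) 2
  calc ‖x' (T t x)‖ * Real.log t = ∫ s in 1..t, ‖x' (T t x)‖ * s⁻¹ := by
        rw [intervalIntegral.integral_const_mul, integral_inv_of_pos one_pos (by linarith), div_one]
    _ ≤ ∫ s in 1..t, G s * F s := by
        refine integral_mono_on ht ((intervalIntegrable_inv_iff.2
          (.inr (notMem_uIcc_of_lt one_pos (by linarith)))).const_mul _)
          ((intervalIntegrable_iff_integrableOn_Ioc_of_le ht).2 (hG.integrable_mul hF)) ?_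
        intro s hs
        have hs0 : 0 < s := by linarith [hs.1]
        simp only [G, F, S, max_eq_left hs0.le, max_eq_left (sub_nonneg.2 hs.2), div_eq_mul_inv,
          ← mul_assoc]
        exact mul_le_mul_of_nonneg_right (norm_dual_apply_le_of_semigroup hT x' x hs0.le hs.2)
          (inv_nonneg.2 hs0.le)
    _ ≤ √(∫ s in 1..t, G s ^ 2) * √(∫ s in 1..t, F s ^ 2) :=
        integral_mul_le_sqrt_mul_sqrt ht (fun _ _ => norm_nonneg _)
          (fun s hs => div_nonneg (norm_nonneg _) (by linarith [hs.1])) hG hF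
    _ = √(∫ u in 0..t - 1, ‖x'.comp (T u)‖ ^ 2) * √(∫ s in 1..t, ‖T s x‖ ^ 2 / s ^ 2) := by
        congr 2
        · rw [integral_comp_sub_left (fun u => ‖x'.comp (S u)‖ ^ 2), sub_self]
          refine integral_congr fun u hu => ?_
          rw [uIcc_of_le (by linarith)] at hu
          simp only [S, max_eq_left hu.1]
        · refine integral_congr fun s hs => ?_
          rw [uIcc_of_le ht] at hs
          simp only [F, S, max_eq_left (by linarith [hs.1] : (0 : ℝ) ≤ s), div_pow]

theorem norm_le_div_log_of_integral_sq_le [CompleteSpace E]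
    (hT : ∀ s t, 0 ≤ s → 0 ≤ t → T (s + t) = (T s).comp (T t))
    (hTcont : ∀ x, ContinuousOn (fun t => T t x) (Ici 0)) {t A B : ℝ} (ht : 1 < t)
    (hA0 : 0 ≤ A) (hB0 : 0 ≤ B)
    (hA : ∀ x' : StrongDual 𝕜 E, ∫ u in 0..t - 1, ‖x'.comp (T u)‖ ^ 2 ≤ (A * ‖x'‖) ^ 2)
    (hB : ∀ x, ∫ s in 1..t, ‖T s x‖ ^ 2 / s ^ 2 ≤ (B * ‖x‖) ^ 2) :
    ‖T t‖ ≤ A * B / Real.log t := by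
  have hlog : 0 < Real.log t := Real.log_pos ht
  refine (T t).opNorm_le_bound (by positivity) fun x =>
    NormedSpace.norm_le_dual_bound 𝕜 _ (by positivity) fun x' => ?_
  have key := (norm_dual_apply_mul_log_le hT hTcont x' x ht.le).trans
    (mul_le_mul (Real.sqrt_le_sqrt (hA x')) (Real.sqrt_le_sqrt (hB x)) (Real.sqrt_nonneg _)
      (Real.sqrt_nonneg _))
  rw [Real.sqrt_sq (by positivity), Real.sqrt_sq (by positivity)] at key
  rw [div_mul_eq_mul_div, div_mul_eq_mul_div, le_div_iff₀ hlog]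
  linarith

theorem integral_norm_sq_div_sq_le_log {α C : ℝ} (hα1 : α ≤ 1) (hC : 0 ≤ C)
    (hTcont : ∀ x, ContinuousOn (fun t => T t x) (Ici 0))
    (hCesaro : ∀ t, 1 < t → ∀ x, ∫ s in 0..t, ‖T s x‖ ^ 2 ≤ C * t ^ (2 * α) * ‖x‖ ^ 2)
    (x : E) {t : ℝ} (ht : Real.exp 1 ≤ t) :
    ∫ s in 1..t, ‖T s x‖ ^ 2 / s ^ 2 ≤ 12 * (C * ‖x‖ ^ 2) * Real.log t := by
  refine integral_div_sq_le_log ((hTcont x).norm.pow 2 |>.locallyIntegrableOn measurableSet_Ici)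
    (fun _ => sq_nonneg _) (fun t' ht' => ?_) ht
  calc ∫ s in 0..t', ‖T s x‖ ^ 2 ≤ C * t' ^ (2 * α) * ‖x‖ ^ 2 := hCesaro t' ht' x
    _ ≤ C * t' ^ (2 : ℝ) * ‖x‖ ^ 2 := by
        gcongr
        exacts [ht'.le, by linarith]
    _ = C * ‖x‖ ^ 2 * t' ^ 2 := by rw [Real.rpow_two]; ring

end Semigroup

theorem cesaro_bounds_imply_log_improvement_general
    {X : Type*} [NormedAddCommGroup X] [NormedSpace ℂ X] [CompleteSpace X]
    (α : ℝ) (hα0 : 0 < α) (hα1 : α ≤ 1)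
    (T : ℝ → X →L[ℂ] X)
    (hTsemigroup : ∀ s t : ℝ, 0 ≤ s → 0 ≤ t → T (s + t) = (T s).comp (T t))
    (hTcont : ∀ x : X, ContinuousOn (fun t => T t x) (Set.Ici (0 : ℝ)))
    (C : ℝ) (hC : 0 < C)
    (hCesaro : ∀ t : ℝ, 1 < t → ∀ x : X,
      ∫ s in (0 : ℝ)..t, ‖T s x‖ ^ 2 ≤ C * t ^ (2 * α) * ‖x‖ ^ 2)
    (hCesaroDual : ∀ t : ℝ, 1 < t → ∀ x' : StrongDual ℂ X,
      ∫ s in (0 : ℝ)..t, ‖x'.comp (T s)‖ ^ 2 ≤ C * t ^ (2 * α) * ‖x'‖ ^ 2) :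
    (fun t : ℝ => ‖T t‖) =O[atTop] fun t : ℝ => t ^ α / Real.sqrt (Real.log t) := by
  have hT_le : ∀ t, 3 ≤ t → ‖T t‖ ≤ √C * √(12 * C) * (t ^ α / √(Real.log t)) := by
    intro t ht
    have hlog : 0 < Real.log t := Real.log_pos (by linarith)
    have hdual : ∀ x' : StrongDual ℂ X,
        ∫ u in 0..t - 1, ‖x'.comp (T u)‖ ^ 2 ≤ (√C * t ^ α * ‖x'‖) ^ 2 := fun x' => calc
      ∫ u in 0..t - 1, ‖x'.comp (T u)‖ ^ 2
          ≤ C * (t - 1) ^ (2 * α) * ‖x'‖ ^ 2 := hCesaroDual (t - 1) (by linarith) x'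
      _ ≤ C * t ^ (2 * α) * ‖x'‖ ^ 2 := by gcongr <;> linarith
      _ = (√C * t ^ α * ‖x'‖) ^ 2 := by
          rw [mul_pow, mul_pow, Real.sq_sqrt hC.le, ← Real.rpow_natCast (t ^ α),
            ← Real.rpow_mul (by linarith), Nat.cast_ofNat, mul_comm α]
    have hprimal : ∀ x : X,
        ∫ s in 1..t, ‖T s x‖ ^ 2 / s ^ 2 ≤ (√(12 * C) * √(Real.log t) * ‖x‖) ^ 2 := fun x =>
      (integral_norm_sq_div_sq_le_log hα1 hC.le hTcont hCesaro x
        (by linarith [Real.exp_one_lt_d9])).trans_eq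
        (by rw [mul_pow, mul_pow, Real.sq_sqrt (by positivity), Real.sq_sqrt hlog.le]; ring)
    calc ‖T t‖ ≤ √C * t ^ α * (√(12 * C) * √(Real.log t)) / Real.log t :=
          norm_le_div_log_of_integral_sq_le hTsemigroup hTcont (by linarith) (by positivity)
            (by positivity) hdual hprimal
      _ = √C * √(12 * C) * (t ^ α / √(Real.log t)) := by
          rw [div_eq_mul_one_div (t ^ α), ← Real.sqrt_div_self']; ring
  refine Asymptotics.IsBigO.of_bound (√C * √(12 * C)) ?_
  filter_upwards [eventually_ge_atTop 3] with t ht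
  rw [norm_norm, Real.norm_of_nonneg (by positivity)]
  exact hT_le t ht

/-- **Lemma.** Let `(T_t)` be a `C₀`-semigroup on a complex Banach space `X` and `α ∈ (0,1]`.
If there is `C > 0` such that for all `t > 1`:
`∫₀ᵗ ‖T_s x‖² ds ≤ C t^{2α} ‖x‖²` for all `x ∈ X`, and
`∫₀ᵗ ‖T_s* x*‖² ds ≤ C t^{2α} ‖x*‖²` for all `x*` in the dual `X*`
(where `T_s* x* = x* ∘ T_s`), then `‖T_t‖ = O(t^α / √(log t))` as `t → ∞`. -/
theorem cesaro_bounds_imply_log_improvement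
    {X : Type*} [NormedAddCommGroup X] [NormedSpace ℂ X] [CompleteSpace X]
    (α : ℝ) (hα0 : 0 < α) (hα1 : α ≤ 1)
    (T : ℝ → X →L[ℂ] X)
    (hT0 : T 0 = 1)
    (hTsemigroup : ∀ s t : ℝ, 0 ≤ s → 0 ≤ t → T (s + t) = (T s).comp (T t))
    (hTcont : ∀ x : X, ContinuousOn (fun t => T t x) (Set.Ici (0 : ℝ)))
    (C : ℝ) (hC : 0 < C)
    (hCesaro : ∀ t : ℝ, 1 < t → ∀ x : X,
      ∫ s in (0 : ℝ)..t, ‖T s x‖ ^ 2 ≤ C * t ^ (2 * α) * ‖x‖ ^ 2)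
    (hCesaroDual : ∀ t : ℝ, 1 < t → ∀ x' : StrongDual ℂ X,
      ∫ s in (0 : ℝ)..t, ‖x'.comp (T s)‖ ^ 2 ≤ C * t ^ (2 * α) * ‖x'‖ ^ 2) :
    (fun t : ℝ => ‖T t‖) =O[atTop] fun t : ℝ => t ^ α / Real.sqrt (Real.log t) :=
  cesaro_bounds_imply_log_improvement_general α hα0 hα1 T hTsemigroup hTcont C hC hCesaro
    hCesaroDual
end

section
/- Let (T_t) be a C₀-semigroup on a Banach space X. If there exist constants C > 0 and 1 ≤ P < Q such that Q < t, then for all x ∈ X and x* ∈ X*: (Q − P)² |⟨T_t x, x*⟩|² ≤ (∫_P^Q ‖T_{t−s} x‖² ds)(∫₀^Q ‖T_s* x*‖² ds). -/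
/-! For `0 ≤ s ≤ t` the semigroup law gives `⟨T_t x, x*⟩ = ⟨T_{t-s} x, T_s* x*⟩`, hence
`|⟨T_t x, x*⟩| ≤ ‖T_{t-s} x‖ ‖T_s* x*‖`. Averaging over `s ∈ [P, Q]` and applying Cauchy–Schwarz
gives the inequality with `∫_P^Q ‖T_s* x*‖²`, which is at most `∫_0^Q ‖T_s* x*‖²`. The analytic
point is that `s ↦ ‖T_s* x*‖` is only lower semicontinuous (a supremum of continuous functions),
hence measurable, and is bounded on compact sets by the uniform boundedness principle, so it is
square integrable there. -/

open MeasureTheory Filter Set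
open scoped ENNReal

namespace ContinuousLinearMap

variable {𝕜 E F α : Type*} [NormedAddCommGroup E] [NormedAddCommGroup F] [TopologicalSpace α]

theorem lowerSemicontinuous_norm_of_continuous_apply [DenselyNormedField 𝕜] [NormedSpace 𝕜 E]
    [NormedSpace 𝕜 F] {S : α → E →L[𝕜] F}
    (hS : ∀ y, Continuous fun a ↦ S a y) : LowerSemicontinuous fun a ↦ ‖S a‖ := by
  intro a r hr
  obtain ⟨y, hy, hry⟩ := (S a).exists_lt_apply_of_lt_opNorm hr
  filter_upwards [(hS y).norm.continuousAt.eventually (eventually_gt_nhds hry)] with b hb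
  exact hb.trans_le ((S b).unit_le_opNorm y hy.le)

theorem exists_forall_norm_le_of_continuousOn_apply [NontriviallyNormedField 𝕜]
    [NormedSpace 𝕜 E] [NormedSpace 𝕜 F] [CompleteSpace E] {S : α → E →L[𝕜] F} {K : Set α}
    (hK : IsCompact K) (hS : ∀ y, ContinuousOn (fun a ↦ S a y) K) : ∃ C, ∀ a ∈ K, ‖S a‖ ≤ C := by
  obtain ⟨C, hC⟩ := banach_steinhaus (g := fun a : K ↦ S a) fun y ↦ by
    obtain ⟨C, hC⟩ := hK.exists_bound_of_continuousOn (hS y)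
    exact ⟨C, fun a ↦ hC a a.2⟩
  exact ⟨C, fun a ha ↦ hC ⟨a, ha⟩⟩

theorem memLp_norm_of_continuousOn_apply [DenselyNormedField 𝕜] [NormedSpace 𝕜 E]
    [NormedSpace 𝕜 F] [CompleteSpace E] {S : ℝ → E →L[𝕜] F} {a b : ℝ} (hab : a ≤ b)
    (hS : ∀ y, ContinuousOn (fun t ↦ S t y) (Icc a b)) (p : ℝ≥0∞) :
    MemLp (fun t ↦ ‖S t‖) p (volume.restrict (Icc a b)) := by
  have hlsc : LowerSemicontinuous fun t ↦ ‖S (projIcc a b hab t)‖ :=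
    lowerSemicontinuous_norm_of_continuous_apply fun y ↦
      (hS y).comp_continuous (continuous_subtype_val.comp continuous_projIcc)
        fun t ↦ (projIcc a b hab t).2
  have hmeas : AEStronglyMeasurable (fun t ↦ ‖S t‖) (volume.restrict (Icc a b)) := by
    refine hlsc.measurable.aestronglyMeasurable.congr ?_
    filter_upwards [ae_restrict_mem measurableSet_Icc] with t ht
    rw [projIcc_of_mem hab ht]
  obtain ⟨C, hC⟩ := exists_forall_norm_le_of_continuousOn_apply isCompact_Icc hS
  refine .of_bound hmeas C ?_
  filter_upwards [ae_restrict_mem measurableSet_Icc] with t ht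
  exact (norm_norm _).trans_le (hC t ht)

end ContinuousLinearMap

theorem ContinuousOn.memLp_restrict_Icc {E : Type*} [NormedAddCommGroup E] {f : ℝ → E}
    {a b : ℝ} (hf : ContinuousOn f (Icc a b)) (p : ℝ≥0∞) :
    MemLp f p (volume.restrict (Icc a b)) := by
  obtain ⟨C, hC⟩ := isCompact_Icc.exists_bound_of_continuousOn hf
  exact .of_bound (hf.aestronglyMeasurable measurableSet_Icc) C
    ((ae_restrict_iff' measurableSet_Icc).2 (.of_forall hC))

theorem sq_mul_sq_le_integral_sq_mul_integral_sq {a b c : ℝ} {f g : ℝ → ℝ} (hab : a ≤ b)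
    (hf : MemLp f 2 (volume.restrict (Icc a b))) (hg : MemLp g 2 (volume.restrict (Icc a b)))
    (hf0 : 0 ≤ f) (hg0 : 0 ≤ g) (hc0 : 0 ≤ c) (hc : ∀ s ∈ Icc a b, c ≤ f s * g s) :
    (b - a) ^ 2 * c ^ 2 ≤ (∫ s in a..b, f s ^ 2) * ∫ s in a..b, g s ^ 2 := by
  have hmean : (b - a) * c ≤ ∫ s in Icc a b, f s * g s := by
    rw [← Real.volume_real_Icc_of_le hab, ← smul_eq_mul, ← setIntegral_const]
    exact setIntegral_mono_on (integrableOn_const measure_Icc_lt_top.ne)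
      (hf.integrable_mul hg) measurableSet_Icc hc
  have hholder := integral_mul_le_Lp_mul_Lq_of_nonneg Real.HolderConjugate.two_two
    (.of_forall hf0) (.of_forall hg0) (by rwa [ENNReal.ofReal_ofNat])
    (by rwa [ENNReal.ofReal_ofNat])
  simp only [Real.rpow_two, ← Real.sqrt_eq_rpow] at hholder
  rw [intervalIntegral.integral_of_le hab, intervalIntegral.integral_of_le hab,
    ← integral_Icc_eq_integral_Ioc, ← integral_Icc_eq_integral_Ioc,
    ← Real.sq_sqrt (integral_nonneg fun s ↦ sq_nonneg (f s)),
    ← Real.sq_sqrt (integral_nonneg fun s ↦ sq_nonneg (g s)), ← mul_pow, ← mul_pow]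
  exact pow_le_pow_left₀ (mul_nonneg (sub_nonneg.2 hab) hc0) (hmean.trans hholder) 2

theorem norm_apply_le_of_semigroup {𝕜 E F : Type*} [NontriviallyNormedField 𝕜]
    [NormedAddCommGroup E] [NormedSpace 𝕜 E] [NormedAddCommGroup F] [NormedSpace 𝕜 F]
    {T : ℝ → E →L[𝕜] E} (hT : ∀ s t : ℝ, 0 ≤ s → 0 ≤ t → T (s + t) = (T s).comp (T t))
    (x : E) (x' : E →L[𝕜] F) {s t : ℝ} (hs : 0 ≤ s) (hst : s ≤ t) :
    ‖x' (T t x)‖ ≤ ‖T (t - s) x‖ * ‖x'.comp (T s)‖ := by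
  have hsplit : x' (T t x) = x'.comp (T s) (T (t - s) x) := by
    rw [← add_sub_cancel s t, hT s (t - s) hs (sub_nonneg.2 hst), add_sub_cancel_left]
    rfl
  rw [hsplit, mul_comm]
  exact (x'.comp (T s)).le_opNorm _

theorem semigroup_duality_inequality_general
    {X : Type*} [NormedAddCommGroup X] [NormedSpace ℂ X] [CompleteSpace X]
    (T : ℝ → X →L[ℂ] X)
    (hTsemigroup : ∀ s t : ℝ, 0 ≤ s → 0 ≤ t → T (s + t) = (T s).comp (T t))
    (hTcont : ∀ x : X, ContinuousOn (fun t => T t x) (Set.Ici (0 : ℝ)))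
    (t P Q : ℝ) (hP : 1 ≤ P) (hPQ : P < Q) (hQt : Q < t) :
    ∀ (x : X) (x' : StrongDual ℂ X),
      (Q - P) ^ 2 * ‖x' (T t x)‖ ^ 2
        ≤ (∫ s in P..Q, ‖T (t - s) x‖ ^ 2) * (∫ s in (0 : ℝ)..Q, ‖x'.comp (T s)‖ ^ 2) := by
  intro x x'
  have hP0 : 0 ≤ P := zero_le_one.trans hP
  have hQ0 : 0 ≤ Q := hP0.trans hPQ.le
  have hf : MemLp (fun s ↦ ‖T (t - s) x‖) 2 (volume.restrict (Icc P Q)) :=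
    ContinuousOn.memLp_restrict_Icc (((hTcont x).comp (by fun_prop) fun s hs ↦
      (show 0 ≤ t - s by linarith [hs.2])).norm) 2
  have hg : MemLp (fun s ↦ ‖x'.comp (T s)‖) 2 (volume.restrict (Icc 0 Q)) :=
    ContinuousLinearMap.memLp_norm_of_continuousOn_apply hQ0
      (fun y ↦ (x'.continuous.comp_continuousOn ((hTcont y).mono Icc_subset_Ici_self) :
        ContinuousOn (fun s ↦ x' (T s y)) (Icc 0 Q))) 2
  calc (Q - P) ^ 2 * ‖x' (T t x)‖ ^ 2
      ≤ (∫ s in P..Q, ‖T (t - s) x‖ ^ 2) * ∫ s in P..Q, ‖x'.comp (T s)‖ ^ 2 :=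
        sq_mul_sq_le_integral_sq_mul_integral_sq hPQ.le hf
          (hg.mono_measure (Measure.restrict_mono (Icc_subset_Icc_left hP0) le_rfl))
          (fun _ ↦ norm_nonneg _) (fun _ ↦ norm_nonneg _) (norm_nonneg _)
          fun s hs ↦ norm_apply_le_of_semigroup hTsemigroup x x' (hP0.trans hs.1)
            (hs.2.trans hQt.le)
    _ ≤ (∫ s in P..Q, ‖T (t - s) x‖ ^ 2) * ∫ s in (0 : ℝ)..Q, ‖x'.comp (T s)‖ ^ 2 := by
        have hg2 : IntervalIntegrable (fun s ↦ ‖x'.comp (T s)‖ ^ 2) volume 0 Q :=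
          (intervalIntegrable_iff_integrableOn_Icc_of_le hQ0).2 hg.integrable_sq
        exact mul_le_mul_of_nonneg_left
          (intervalIntegral.integral_mono_interval hP0 hPQ.le le_rfl
            (.of_forall fun _ ↦ sq_nonneg _) hg2)
          (intervalIntegral.integral_nonneg hPQ.le fun _ _ ↦ sq_nonneg _)

/-- **Key inequality.** Let `(T_t)` be a `C₀`-semigroup on a complex Banach space `X`, and
let `1 ≤ P < Q < t`. Then for all `x ∈ X` and `x*` in the dual `X*`:
`(Q − P)² |⟨T_t x, x*⟩|² ≤ (∫_P^Q ‖T_{t−s} x‖² ds) (∫₀^Q ‖T_s* x*‖² ds)`,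
where `T_s* x* = x* ∘ T_s`. -/
theorem semigroup_duality_inequality
    {X : Type*} [NormedAddCommGroup X] [NormedSpace ℂ X] [CompleteSpace X]
    (T : ℝ → X →L[ℂ] X)
    (hT0 : T 0 = 1)
    (hTsemigroup : ∀ s t : ℝ, 0 ≤ s → 0 ≤ t → T (s + t) = (T s).comp (T t))
    (hTcont : ∀ x : X, ContinuousOn (fun t => T t x) (Set.Ici (0 : ℝ)))
    (t P Q : ℝ) (hP : 1 ≤ P) (hPQ : P < Q) (hQt : Q < t) :
    ∀ (x : X) (x' : StrongDual ℂ X),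
      (Q - P) ^ 2 * ‖x' (T t x)‖ ^ 2
        ≤ (∫ s in P..Q, ‖T (t - s) x‖ ^ 2) * (∫ s in (0 : ℝ)..Q, ‖x'.comp (T s)‖ ^ 2) :=
  semigroup_duality_inequality_general T hTsemigroup hTcont t P Q hP hPQ hQt
end
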